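/- Let G be a RAN whose clique-tree T has two degree-4 vertices q_i, q_j joined by a neat slim path ⟨q_i, q_1, …, q_p, q_j⟩ with p ≥ 2 and |Q_i ∩ Q_j| = 2. Then removing S = Q_i ∪ Q_j (with |S| = 6) from G produces at least 7 components, hence τ(G) < 1 and G is non-Hamiltonian. -/

import Mathlib

open SimpleGraph ENNReal

namespace RanTough

/-- Number of connected components after deleting the vertex set `S` from `G`. -/
noncomputable def compCount {V : Type*} (G : SimpleGraph V) (S : Finset V) : ℕ :=
  Nat.card (G.induce ((↑S : Set V)ᶜ)).ConnectedComponent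

/-- `G` is `t`-tough: `t * ω(G - S) ≤ |S|` whenever deleting `S` disconnects `G`. -/
def IsTough {V : Type*} (G : SimpleGraph V) (t : ℝ≥0∞) : Prop :=
  ∀ S : Finset V, 1 < compCount G S → t * compCount G S ≤ S.card

/-- The toughness of `G`: the largest `t` such that `G` is `t`-tough
(`⊤` for complete graphs). -/
noncomputable def toughness {V : Type*} (G : SimpleGraph V) : ℝ≥0∞ :=
  sSup {t : ℝ≥0∞ | IsTough G t}

/-- A vertex is simplicial if its neighborhood is a clique. -/
def IsSimplicial {V : Type*} (G : SimpleGraph V) (v : V) : Prop :=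
  G.IsClique (G.neighborSet v)

/-- `G` is a `k`-tree: there is a construction ordering starting from a
`(k+1)`-clique in which each later vertex is attached to a `k`-clique
of earlier vertices. -/
def IsKTree {V : Type*} [Fintype V] (k : ℕ) (G : SimpleGraph V) : Prop :=
  k + 1 ≤ Fintype.card V ∧
  ∃ e : Fin (Fintype.card V) ≃ V,
    (∀ i j : Fin (Fintype.card V), (i : ℕ) < k + 1 → (j : ℕ) < k + 1 → i ≠ j →
      G.Adj (e i) (e j)) ∧
    (∀ i : Fin (Fintype.card V), k + 1 ≤ (i : ℕ) →
      ∃ S : Finset V, S.card = k ∧ G.IsClique (S : Set V) ∧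
        ∀ w : V, (G.Adj (e i) w ∧ ∃ j, j < i ∧ e j = w) ↔ w ∈ S)

/-- `Q` is a maximal clique of `G`. -/
def IsMaximalClique {V : Type*} (G : SimpleGraph V) (Q : Finset V) : Prop :=
  G.IsClique (Q : Set V) ∧ ∀ R : Finset V, G.IsClique (R : Set V) → Q ⊆ R → Q = R

/-- A clique-tree of `G`: a tree on the maximal cliques of `G` satisfying the
induced subtree property. -/
def IsCliqueTree {V : Type*} (G : SimpleGraph V)
    (T : SimpleGraph {Q : Finset V // IsMaximalClique G Q}) : Prop :=
  T.IsTree ∧ ∀ v : V,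
    (T.induce {Q : {Q : Finset V // IsMaximalClique G Q} | v ∈ (Q : Finset V)}).Connected

/-- A Random Apollonian Network: a uniquely representable (unique clique-tree) 3-tree. -/
def IsRAN {V : Type*} [Fintype V] (G : SimpleGraph V) : Prop :=
  IsKTree 3 G ∧ ∃! T : SimpleGraph {Q : Finset V // IsMaximalClique G Q}, IsCliqueTree G T

/-- `S` separates the nonadjacent vertices `u` and `v`. -/
def IsUVSeparator {V : Type*} (G : SimpleGraph V) (u v : V) (S : Finset V) : Prop :=
  u ≠ v ∧ ¬ G.Adj u v ∧ u ∉ S ∧ v ∉ S ∧ ∀ p : G.Walk u v, ∃ w ∈ p.support, w ∈ S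

/-- `S` is a minimal vertex separator of `G`. -/
def IsMinVtxSep {V : Type*} (G : SimpleGraph V) (S : Finset V) : Prop :=
  ∃ u v : V, IsUVSeparator G u v S ∧ ∀ S' : Finset V, S' ⊂ S → ¬ IsUVSeparator G u v S'

/-- The multiplicity of `S` as a minimal vertex separator with respect to
the clique-tree `T`: the number of edges of `T` whose endpoint intersection is `S`. -/
noncomputable def sepMultiplicity {V : Type*} [DecidableEq V] (G : SimpleGraph V)
    (T : SimpleGraph {Q : Finset V // IsMaximalClique G Q}) (S : Finset V) : ℕ :=
  {e ∈ T.edgeSet | ∃ Q Q' : {Q : Finset V // IsMaximalClique G Q},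
    e = s(Q, Q') ∧ (Q : Finset V) ∩ (Q' : Finset V) = S}.ncard

/-- Degree of a vertex in a graph, via `Set.ncard` (no instances needed). -/
noncomputable def deg {α : Type*} (T : SimpleGraph α) (q : α) : ℕ :=
  {r | T.Adj q r}.ncard

/-- A `k`-regular tree: every vertex that is not a leaf has degree `k`. -/
def IsRegularTree {α : Type*} (k : ℕ) (T : SimpleGraph α) : Prop :=
  T.IsTree ∧ ∀ q : α, deg T q = 1 ∨ deg T q = k

/-- Chordal: every cycle of length at least 4 has a chord. -/
def IsChordal {V : Type*} (G : SimpleGraph V) : Prop :=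
  ∀ (v : V) (c : G.Walk v v), c.IsCycle → 4 ≤ c.length →
    ∃ x y : V, x ∈ c.support ∧ y ∈ c.support ∧ G.Adj x y ∧ s(x, y) ∉ c.edges

/-- `H` is a minor of `G`. -/
def IsMinor {W V : Type*} (H : SimpleGraph W) (G : SimpleGraph V) : Prop :=
  ∃ B : W → Set V,
    (∀ w, (G.induce (B w)).Connected) ∧
    (∀ w₁ w₂, w₁ ≠ w₂ → Disjoint (B w₁) (B w₂)) ∧
    (∀ w₁ w₂, H.Adj w₁ w₂ → ∃ u ∈ B w₁, ∃ v ∈ B w₂, G.Adj u v)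

/-- Planar (Wagner): no `K₅` and no `K₃,₃` minor. -/
def IsPlanar {V : Type*} (G : SimpleGraph V) : Prop :=
  ¬ IsMinor (⊤ : SimpleGraph (Fin 5)) G ∧
  ¬ IsMinor (completeBipartiteGraph (Fin 3) (Fin 3)) G

end RanTough

open RanTough


/-!
Maximal cliques of a 3-tree have four vertices, so `|S| = 6` for `S = Q_i ∪ Q_j`. The cliques
containing a vertex `v ∉ S` form a subtree of the clique tree avoiding `Q_i` and `Q_j`, and
adjacent vertices share a clique; hence vertices outside `S` lying in cliques from different
branches of the tree at `Q_i`, `Q_j` are in different components of `G - S`. Seven cliques in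
distinct branches have a vertex outside `S`: the three off-path neighbours of `Q_i` and of `Q_j`
(a neighbour of `Q_i` inside `Q_i ∪ Q_j` would lie inside `Q_i`), and one of the first two
internal nodes of the path (if both lay inside `S`, the condition `|Q_i ∩ Q_j| = 2` would force
them to coincide). Finally, a Hamiltonian cycle enters the components of `G - S` from distinct
vertices of `S`.
-/

namespace SimpleGraph

variable {α : Type*} {H : SimpleGraph α}

def PathMeets (H : SimpleGraph α) (Z : Set α) (a b : α) : Prop :=
  ∃ P : H.Walk a b, P.IsPath ∧ ∃ z ∈ P.support, z ∈ Z

lemma PathMeets.symm {Z : Set α} {a b : α} (h : H.PathMeets Z a b) : H.PathMeets Z b a := by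
  obtain ⟨P, hP, z, hz, hzZ⟩ := h
  exact ⟨P.reverse, hP.reverse, z, by simpa using hz, hzZ⟩

lemma PathMeets.mono {Z Z' : Set α} (hZ : Z ⊆ Z') {a b : α} (h : H.PathMeets Z a b) :
    H.PathMeets Z' a b := by
  obtain ⟨P, hP, z, hz, hzZ⟩ := h
  exact ⟨P, hP, z, hz, hZ hzZ⟩

lemma IsAcyclic.support_subset_of_reachable_induce (hH : H.IsAcyclic) {K : Set α} {a b : K}
    (h : (H.induce K).Reachable a b) {P : H.Walk a b} (hP : P.IsPath) :
    {z | z ∈ P.support} ⊆ K := by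
  classical
  obtain ⟨W⟩ := h
  have hPW : P = (W.map (Embedding.induce K).toHom).bypass :=
    congrArg Subtype.val ((hH.subsingleton_path a b).elim ⟨P, hP⟩ ⟨_, Walk.bypass_isPath _⟩)
  intro z hz
  have hzW : z ∈ (W.map (Embedding.induce K).toHom).support :=
    Walk.support_bypass_subset_support _ (hPW ▸ hz)
  rw [Walk.support_map] at hzW
  obtain ⟨z', -, rfl⟩ := List.mem_map.1 hzW
  exact z'.2

lemma IsAcyclic.not_reachable_induce_compl (hH : H.IsAcyclic) {Z : Set α} {a b : α}
    (h : H.PathMeets Z a b) (ha : a ∈ Zᶜ) (hb : b ∈ Zᶜ) :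
    ¬ (H.induce Zᶜ).Reachable ⟨a, ha⟩ ⟨b, hb⟩ := by
  intro hreach
  obtain ⟨P, hP, z, hz, hzZ⟩ := h
  exact hH.support_subset_of_reachable_induce hreach hP hz hzZ

namespace Walk

def offNeighborSet {x y : α} (p : H.Walk x y) : Set α :=
  H.neighborSet x \ {r | r ∈ p.support}

variable {x y : α} {p : H.Walk x y}

@[simp]
lemma mem_offNeighborSet {r : α} : r ∈ p.offNeighborSet ↔ H.Adj x r ∧ r ∉ p.support :=
  Iff.rfl

lemma IsPath.pathMeets_of_mem_support (hp : p.IsPath) {r z : α} (hr : r ∈ p.offNeighborSet)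
    (hz : z ∈ p.support) : H.PathMeets {x} r z := by
  classical
  refine ⟨.cons hr.1.symm (p.takeUntil z hz), ?_, x, by simp, rfl⟩
  exact (hp.takeUntil hz).cons fun h => hr.2 (p.support_takeUntil_subset_support hz h)

lemma IsPath.pathMeets_of_mem_reverse (hp : p.IsPath) {r s : α} (hr : r ∈ p.offNeighborSet)
    (hs : s ∈ p.reverse.offNeighborSet) (hrs : r ≠ s) : H.PathMeets {x} r s := by
  rw [mem_offNeighborSet, support_reverse, List.mem_reverse] at hs
  refine (hp.concat hs.2 hs.1).pathMeets_of_mem_support ?_ (p.concat hs.1).end_mem_support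
  rw [mem_offNeighborSet, support_concat]
  simpa [hrs] using hr

lemma IsPath.pathMeets_of_mem_offNeighborSet (hp : p.IsPath) {r b : α}
    (hr : r ∈ p.offNeighborSet)
    (hb : b ∈ p.offNeighborSet ∨ b ∈ p.reverse.offNeighborSet ∨ b ∈ p.support) (hrb : r ≠ b) :
    H.PathMeets {x} r b := by
  rcases hb with hb | hb | hb
  · rw [mem_offNeighborSet] at hr hb
    refine ⟨.cons hr.1.symm (.cons hb.1 .nil), ?_, x, by simp, rfl⟩
    simp [hr.1.ne', hb.1.ne, hrb]
  · exact hp.pathMeets_of_mem_reverse hr hb hrb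
  · exact hp.pathMeets_of_mem_support hr hb

lemma IsPath.pairwise_pathMeets (hp : p.IsPath) {m : α} (hm : m ∈ p.support) :
    (p.offNeighborSet ∪ p.reverse.offNeighborSet ∪ {m}).Pairwise (H.PathMeets {x, y}) := by
  have hmr : m ∈ p.reverse.support := by simpa using hm
  have hx : ({x} : Set α) ⊆ {x, y} := by simp
  have hy : ({y} : Set α) ⊆ {x, y} := by simp
  rintro a ((ha | ha) | rfl) b hb hab
  · refine (hp.pathMeets_of_mem_offNeighborSet ha ?_ hab).mono hx
    rcases hb with (hb | hb) | rfl <;> simp_all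
  · refine (hp.reverse.pathMeets_of_mem_offNeighborSet ha ?_ hab).mono hy
    rcases hb with (hb | hb) | rfl <;> simp_all
  · rcases hb with (hb | hb) | rfl
    · exact ((hp.pathMeets_of_mem_offNeighborSet hb (.inr (.inr hm)) hab.symm).mono hx).symm
    · exact ((hp.reverse.pathMeets_of_mem_offNeighborSet hb (.inr (.inr hmr)) hab.symm).mono
        hy).symm
    · exact absurd rfl hab

end Walk

lemma IsAcyclic.offNeighborSet_eq (hH : H.IsAcyclic) {x y : α} {p : H.Walk x y}
    (hp : p.IsPath) : p.offNeighborSet = H.neighborSet x \ {p.snd} := by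
  ext r
  simp only [Walk.mem_offNeighborSet, Set.mem_sdiff, mem_neighborSet, Set.mem_singleton_iff]
  exact and_congr_right fun hr =>
    ⟨fun h hsnd => h (hsnd ▸ p.getVert_mem_support 1),
      fun hne hmem => hne (hH.eq_snd_of_adj_start hp hr hmem)⟩

lemma IsAcyclic.ncard_offNeighborSet_add_one [Finite α] (hH : H.IsAcyclic) {x y : α}
    {p : H.Walk x y} (hp : p.IsPath) (hxy : x ≠ y) :
    p.offNeighborSet.ncard + 1 = (H.neighborSet x).ncard := by
  rw [hH.offNeighborSet_eq hp]
  exact Set.ncard_sdiff_singleton_add_one (p.adj_snd (Walk.not_nil_of_ne hxy))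

lemma IsAcyclic.disjoint_offNeighborSet_reverse (hH : H.IsAcyclic) {x y : α}
    {p : H.Walk x y} (hp : p.IsPath) (hxy : x ≠ y) :
    Disjoint p.offNeighborSet p.reverse.offNeighborSet := by
  refine Set.disjoint_left.2 fun r hr hr' => ?_
  rw [Walk.mem_offNeighborSet] at hr hr'
  have hq : (Walk.cons hr.1 .nil : H.Walk x r).IsPath := by simp [hr.1.ne]
  exact hr.2 (hH.mem_support_of_ne_mem_support_of_adj_of_isPath hp hq hr'.1
    (by simp [hxy.symm, hr'.1.ne]))

lemma Walk.exists_dart_entering {S : Set α} {u b : α} (W : H.Walk u b)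
    (hb : b ∈ S) {v : α} (hv : v ∉ S) (hvW : v ∈ W.support) :
    ∃ d ∈ W.darts, d.snd ∈ S ∧
      ∃ hd : d.fst ∉ S, (H.induce Sᶜ).Reachable ⟨v, hv⟩ ⟨d.fst, hd⟩ := by
  induction W generalizing v with
  | nil => exact absurd (List.mem_singleton.1 hvW ▸ hb) hv
  | @cons u w b huw W ih =>
    rcases List.mem_cons.1 hvW with rfl | hvW
    · by_cases hw : w ∈ S
      · exact ⟨⟨(v, w), huw⟩, by simp, hw, hv, .rfl⟩
      obtain ⟨d, hd, hdS, hdf, hreach⟩ := ih hb hw W.start_mem_support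
      have hvw : (H.induce Sᶜ).Reachable ⟨v, hv⟩ ⟨w, hw⟩ := Adj.reachable huw
      exact ⟨d, by simp [hd], hdS, hdf, hvw.trans hreach⟩
    · obtain ⟨d, hd, hdS, hdf, hreach⟩ := ih hb hv hvW
      exact ⟨d, by simp [hd], hdS, hdf, hreach⟩

end SimpleGraph

namespace RanTough

variable {V : Type*} {G : SimpleGraph V}

abbrev MaxClique (G : SimpleGraph V) : Type _ := {Q : Finset V // IsMaximalClique G Q}

lemma exists_isMaximalClique_superset [Finite V] {s : Finset V} (hs : G.IsClique (s : Set V)) :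
    ∃ Q, IsMaximalClique G Q ∧ s ⊆ Q := by
  obtain ⟨Q, hsQ, hQ⟩ :=
    Finite.exists_le_maximal (p := fun R : Finset V => G.IsClique (R : Set V) ∧ s ⊆ R)
      ⟨hs, le_rfl⟩
  exact ⟨Q, ⟨hQ.prop.1, fun R hR hQR => le_antisymm hQR (hQ.2 ⟨hR, hsQ.trans hQR⟩ hQR)⟩, hsQ⟩

lemma MaxClique.not_subset_of_ne {Q R : MaxClique G} (h : Q ≠ R) : ¬ (Q : Finset V) ⊆ R :=
  fun hQR => h (Subtype.ext (Q.2.2 R R.2.1 hQR))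

lemma IsKTree.card_eq_of_isMaximalClique [Fintype V] {k : ℕ} (hG : IsKTree k G) {Q : Finset V}
    (hQ : IsMaximalClique G Q) : Q.card = k + 1 := by
  classical
  obtain ⟨hn, e, hbase, hstep⟩ := hG
  by_cases hlarge : ∃ v ∈ Q, k + 1 ≤ (e.symm v : ℕ)
  · obtain ⟨v₀, hv₀Q, hv₀⟩ := hlarge
    -- the vertex of `Q` added last is attached to a `k`-clique containing the rest of `Q`
    obtain ⟨v, hvQ, hvmax⟩ := Q.exists_max_image e.symm ⟨v₀, hv₀Q⟩
    obtain ⟨S, hScard, hSclique, hS⟩ := hstep (e.symm v) (hv₀.trans (hvmax v₀ hv₀Q))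
    simp only [Equiv.apply_symm_apply] at hS
    have hvS : v ∉ S := fun h => ((hS v).2 h).1.ne rfl
    have hQS : Q ⊆ insert v S := by
      intro w hw
      rcases eq_or_ne w v with rfl | hwv
      · exact Finset.mem_insert_self _ _
      refine Finset.mem_insert_of_mem ((hS w).1 ⟨hQ.1 hvQ hw hwv.symm, e.symm w, ?_, by simp⟩)
      exact (hvmax w hw).lt_of_ne (e.symm.injective.ne hwv)
    have hclique : G.IsClique ((insert v S : Finset V) : Set V) := by
      rw [Finset.coe_insert]
      exact hSclique.insert fun b hb _ => ((hS b).2 hb).1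
    rw [hQ.2 _ hclique hQS, Finset.card_insert_of_notMem hvS, hScard]
  · push Not at hlarge
    set B : Finset V := Finset.univ.map ((Fin.castLEEmb hn).trans e.toEmbedding)
    have hBclique : G.IsClique (B : Set V) := by
      rintro _ hu _ hv huv
      simp only [B, Finset.coe_map, Finset.coe_univ, Set.image_univ, Set.mem_range] at hu hv
      obtain ⟨i, rfl⟩ := hu
      obtain ⟨j, rfl⟩ := hv
      exact hbase _ _ (by simpa using i.2) (by simpa using j.2) fun h => huv (by simp [h])
    have hQB : Q ⊆ B := fun v hv =>
      Finset.mem_map.2 ⟨⟨e.symm v, hlarge v hv⟩, Finset.mem_univ _, by simp⟩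
    rw [hQ.2 B hBclique hQB]
    simp [B]

lemma eq_of_subset_union_of_card_le [DecidableEq V] {x y a b : Finset V} (hxya : x ∩ y ⊆ a)
    (hxba : x ∩ b ⊆ a) (hayb : a ∩ y ⊆ b) (hax : ¬ a ⊆ x) (hby : ¬ b ⊆ y) (ha : a ⊆ x ∪ y)
    (hb : b ⊆ x ∪ y) (hacard : a.card ≤ (x ∩ y).card + 2) (hbcard : b.card ≤ (x ∩ y).card + 2) :
    a = b := by
  obtain ⟨v, hva, hvx⟩ := Finset.not_subset.1 hax
  have hvy : v ∈ y := (Finset.mem_union.1 (ha hva)).resolve_left hvx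
  obtain ⟨w, hwb, hwy⟩ := Finset.not_subset.1 hby
  have hwx : w ∈ x := (Finset.mem_union.1 (hb hwb)).resolve_right hwy
  set C := insert w (insert v (x ∩ y))
  have hC : C.card = (x ∩ y).card + 2 := by
    rw [Finset.card_insert_of_notMem, Finset.card_insert_of_notMem]
    · simp [hvx]
    · simp [hwy, show w ≠ v by rintro rfl; exact hvx hwx]
  have hCa : C ⊆ a := by
    simp only [C, Finset.insert_subset_iff]
    exact ⟨hxba (Finset.mem_inter.2 ⟨hwx, hwb⟩), hva, hxya⟩
  have hCb : C ⊆ b := by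
    simp only [C, Finset.insert_subset_iff]
    refine ⟨hwb, hayb (Finset.mem_inter.2 ⟨hva, hvy⟩), fun t ht => hayb ?_⟩
    exact Finset.mem_inter.2 ⟨hxya ht, (Finset.mem_inter.1 ht).2⟩
  rw [← Finset.eq_of_subset_of_card_le hCa (hacard.trans hC.ge),
    ← Finset.eq_of_subset_of_card_le hCb (hbcard.trans hC.ge)]

section CliqueTree

variable {T : SimpleGraph (MaxClique G)}

lemma IsCliqueTree.inter_subset_of_mem_support [DecidableEq V] (hT : IsCliqueTree G T)
    {A B : MaxClique G} {P : T.Walk A B} (hP : P.IsPath) {z : MaxClique G} (hz : z ∈ P.support) :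
    (A : Finset V) ∩ B ⊆ z := by
  intro v hv
  rw [Finset.mem_inter] at hv
  exact hT.1.isAcyclic.support_subset_of_reachable_induce (a := ⟨A, hv.1⟩) (b := ⟨B, hv.2⟩)
    ((hT.2 v).preconnected _ _) hP hz

lemma IsCliqueTree.not_subset_union_of_mem_offNeighborSet [DecidableEq V]
    (hT : IsCliqueTree G T) {x y r : MaxClique G} {p : T.Walk x y} (hp : p.IsPath)
    (hr : r ∈ p.offNeighborSet) :
    ¬ (r : Finset V) ⊆ x ∪ y := by
  rw [Walk.mem_offNeighborSet] at hr
  intro hsub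
  -- `x` lies on the path from `r` to `y`, so `r ∩ y ⊆ x`, whence `r ⊆ x`
  have hry : (r : Finset V) ∩ y ⊆ x :=
    hT.inter_subset_of_mem_support (hp.cons hr.2 (h := hr.1.symm)) (by simp)
  refine MaxClique.not_subset_of_ne hr.1.ne' fun v hv => ?_
  rcases Finset.mem_union.1 (hsub hv) with h | h
  exacts [h, hry (Finset.mem_inter.2 ⟨hv, h⟩)]

lemma IsCliqueTree.exists_mem_support_not_subset_union [DecidableEq V] (hT : IsCliqueTree G T)
    {k : ℕ} (hcard : ∀ Q : MaxClique G, (Q : Finset V).card = k) {x y : MaxClique G}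
    (hxy : ((x : Finset V) ∩ y).card + 2 = k) {p : T.Walk x y} (hp : p.IsPath)
    (hlen : 3 ≤ p.length) : ∃ m ∈ p.support, ¬ (m : Finset V) ⊆ x ∪ y := by
  match p, hp, hlen with
  | .nil, _, hlen => simp at hlen
  | .cons _ .nil, _, hlen => simp at hlen
  | .cons (v := a) hxa (.cons (v := b) hab q), hp, hlen =>
    have hby : b ≠ y := by
      rintro rfl
      simp [Walk.length_eq_zero_iff.2 (Walk.isPath_iff_nil.1 hp.of_cons.of_cons)] at hlen
    have hxb : x ≠ b := by
      rintro rfl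
      exact ((Walk.cons_isPath_iff _ _).1 hp).2 (by simp)
    have hxab : (Walk.cons hxa (.cons hab .nil) : T.Walk x b).IsPath := by
      simp [hxa.ne, hab.ne, hxb]
    by_contra! h
    refine hab.ne (Subtype.ext <| eq_of_subset_union_of_card_le ?_ ?_ ?_ ?_ ?_
      (h a (by simp)) (h b (by simp)) (by rw [hcard, hxy]) (by rw [hcard, hxy]))
    · exact hT.inter_subset_of_mem_support hp (by simp)
    · exact hT.inter_subset_of_mem_support hxab (by simp)
    · exact hT.inter_subset_of_mem_support hp.of_cons (by simp)
    · exact MaxClique.not_subset_of_ne hxa.ne'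
    · exact MaxClique.not_subset_of_ne hby

lemma IsCliqueTree.reachable_of_mem_of_mem (hT : IsCliqueTree G T) {S : Finset V} {u : V}
    (hu : u ∉ S) {A B : MaxClique G} (hA : u ∈ (A : Finset V)) (hB : u ∈ (B : Finset V)) :
    (T.induce {Q : MaxClique G | (Q : Finset V) ⊆ S}ᶜ).Reachable ⟨A, fun h => hu (h hA)⟩
      ⟨B, fun h => hu (h hB)⟩ :=
  ((hT.2 u).preconnected ⟨A, hA⟩ ⟨B, hB⟩).map
    (T.induceHomOfLE (s' := {Q : MaxClique G | (Q : Finset V) ⊆ S}ᶜ)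
      fun _ hQ h => hu (h hQ)).toHom

lemma IsCliqueTree.reachable_of_reachable [Finite V] (hT : IsCliqueTree G T) {S : Finset V}
    {u w : ((S : Set V)ᶜ : Set V)} (h : (G.induce (S : Set V)ᶜ).Reachable u w)
    {A B : MaxClique G} (hA : (u : V) ∈ (A : Finset V)) (hB : (w : V) ∈ (B : Finset V)) :
    (T.induce {Q : MaxClique G | (Q : Finset V) ⊆ S}ᶜ).Reachable ⟨A, fun h => u.2 (h hA)⟩
      ⟨B, fun h => w.2 (h hB)⟩ := by
  classical
  obtain ⟨W⟩ := h
  induction W generalizing A with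
  | nil => exact hT.reachable_of_mem_of_mem _ hA hB
  | @cons u v w huv W ih =>
    have hpair : G.IsClique (({(u : V), (v : V)} : Finset V) : Set V) := by
      rw [Finset.coe_pair]
      exact isClique_pair.2 fun _ => huv
    obtain ⟨Q, hQ, huvQ⟩ := exists_isMaximalClique_superset hpair
    rw [Finset.insert_subset_iff, Finset.singleton_subset_iff] at huvQ
    exact (hT.reachable_of_mem_of_mem u.2 hA huvQ.1).trans (ih (A := ⟨Q, hQ⟩) huvQ.2 hB)

lemma IsCliqueTree.ncard_le_compCount [Finite V] (hT : IsCliqueTree G T) (S : Finset V)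
    {𝒬 : Set (MaxClique G)} (hS : ∀ Q ∈ 𝒬, ¬ (Q : Finset V) ⊆ S)
    (hsep : 𝒬.Pairwise (T.PathMeets {Q | (Q : Finset V) ⊆ S})) : 𝒬.ncard ≤ compCount G S := by
  have hv (Q : 𝒬) : ∃ v : ((S : Set V)ᶜ : Set V), (v : V) ∈ (Q : Finset V) := by
    obtain ⟨v, hvQ, hvS⟩ := Finset.not_subset.1 (hS Q Q.2)
    exact ⟨⟨v, hvS⟩, hvQ⟩
  choose v hvQ using hv
  rw [← Nat.card_coe_set_eq, compCount]
  refine Nat.card_le_card_of_injective (fun Q => (G.induce _).connectedComponentMk (v Q))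
    fun Q R hQR => ?_
  by_contra hne
  exact hT.1.isAcyclic.not_reachable_induce_compl (hsep Q.2 R.2 (Subtype.coe_ne_coe.2 hne))
    (hS _ Q.2) (hS _ R.2)
    (hT.reachable_of_reachable (ConnectedComponent.exact hQR) (hvQ Q) (hvQ R))

lemma IsCliqueTree.ncard_neighborSet_add_le_compCount [DecidableEq V] [Finite V]
    (hT : IsCliqueTree G T) {k : ℕ} (hcard : ∀ Q : MaxClique G, (Q : Finset V).card = k)
    {x y : MaxClique G} (hxy : ((x : Finset V) ∩ y).card + 2 = k) {p : T.Walk x y}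
    (hp : p.IsPath) (hlen : 3 ≤ p.length) :
    (T.neighborSet x).ncard + (T.neighborSet y).ncard ≤ compCount G (x ∪ y) + 1 := by
  have hac := hT.1.isAcyclic
  have hne : x ≠ y := by
    rintro rfl
    simp [Walk.length_eq_zero_iff.2 (Walk.isPath_iff_nil.1 hp)] at hlen
  obtain ⟨m, hm, hmU⟩ := hT.exists_mem_support_not_subset_union hcard hxy hp hlen
  have hcount : (p.offNeighborSet ∪ p.reverse.offNeighborSet ∪ {m}).ncard + 1 =
      (T.neighborSet x).ncard + (T.neighborSet y).ncard := by
    rw [← hac.ncard_offNeighborSet_add_one hp hne,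
      ← hac.ncard_offNeighborSet_add_one hp.reverse hne.symm, Set.ncard_union_eq,
      Set.ncard_union_eq (hac.disjoint_offNeighborSet_reverse hp hne), Set.ncard_singleton]
    · ring
    · simp [hm]
  have hsep : (p.offNeighborSet ∪ p.reverse.offNeighborSet ∪ {m}).Pairwise
      (T.PathMeets {Q | (Q : Finset V) ⊆ x ∪ y}) :=
    (hp.pairwise_pathMeets hm).mono' fun A B h => h.mono <| by
      rintro Q (rfl | rfl)
      exacts [Finset.subset_union_left, Finset.subset_union_right]
  refine hcount ▸ Nat.add_le_add_right (hT.ncard_le_compCount _ ?_ hsep) 1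
  rintro Q ((hQ | hQ) | rfl)
  · exact hT.not_subset_union_of_mem_offNeighborSet hp hQ
  · rw [Finset.union_comm]
    exact hT.not_subset_union_of_mem_offNeighborSet hp.reverse hQ
  · exact hmU

end CliqueTree

lemma toughness_lt_one_of_card_lt_compCount {S : Finset V} (hS : S.Nonempty)
    (h : S.card < compCount G S) : toughness G < 1 := by
  have hc : 1 < compCount G S := by have := hS.card_pos; omega
  calc toughness G ≤ (S.card : ℝ≥0∞) / compCount G S :=
        sSup_le fun t ht => (ENNReal.le_div_iff_mul_le (by simp; omega) (by simp)).2 (ht S hc)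
    _ < 1 := (ENNReal.div_lt_iff (by simp; omega) (by simp)).2 (by simpa using h)

lemma compCount_le_card_of_isHamiltonian [Fintype V] [DecidableEq V] (hG : G.IsHamiltonian)
    {S : Finset V} (hS : S.Nonempty) : compCount G S ≤ S.card := by
  obtain ⟨a, haS⟩ := hS
  rcases subsingleton_or_nontrivial V with _ | _
  · have : IsEmpty ((S : Set V)ᶜ : Set V) := ⟨fun v => v.2 (Subsingleton.elim a v ▸ haS)⟩
    simp [compCount]
  obtain ⟨c, hc⟩ := hG.exists_isHamiltonianCycle a
  -- every component is entered from `S` by a dart of `c`, and distinct darts of a cycle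
  -- end at distinct vertices
  have hdart (D : (G.induce (S : Set V)ᶜ).ConnectedComponent) : ∃ d ∈ c.darts, d.snd ∈ S ∧
      ∃ hd : d.fst ∉ S, (G.induce (S : Set V)ᶜ).connectedComponentMk ⟨d.fst, hd⟩ = D := by
    obtain ⟨⟨v, hv⟩, rfl⟩ := D.exists_rep
    obtain ⟨d, hd, hdS, hdf, hreach⟩ := c.exists_dart_entering haS hv (hc.mem_support v)
    exact ⟨d, hd, hdS, hdf, (ConnectedComponent.sound hreach).symm⟩
  choose d hd hdS hdf hdD using hdart
  have hinj : Function.Injective fun D => (⟨(d D).snd, hdS D⟩ : S) := by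
    intro D D' h
    have hnodup : (c.darts.map (·.snd)).Nodup := by
      rw [Walk.map_snd_darts]
      exact hc.isCycle.support_nodup
    have hdd : d D = d D' := List.inj_on_of_nodup_map hnodup (hd D) (hd D') (congrArg Subtype.val h)
    rw [← hdD D, ← hdD D']
    simp only [hdd]
  calc compCount G S ≤ Nat.card S := Nat.card_le_card_of_injective _ hinj
    _ = S.card := Nat.card_eq_finsetCard S

end RanTough

theorem ran_slimPath_case1_general {V : Type*} [Fintype V] [DecidableEq V]
    (G : SimpleGraph V) (hG : IsRAN G)
    (T : SimpleGraph {Q : Finset V // IsMaximalClique G Q}) (hT : IsCliqueTree G T)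
    (qi qj : {Q : Finset V // IsMaximalClique G Q})
    (hqi : deg T qi = 4) (hqj : deg T qj = 4)
    (p : T.Walk qi qj) (hp : p.IsPath) (hlen : 3 ≤ p.length)
    (hcap : ((qi : Finset V) ∩ (qj : Finset V)).card = 2) :
    ((qi : Finset V) ∪ (qj : Finset V)).card = 6 ∧
    7 ≤ compCount G ((qi : Finset V) ∪ (qj : Finset V)) ∧
    toughness G < 1 ∧ ¬ G.IsHamiltonian := by
  have hcard (Q : MaxClique G) : (Q : Finset V).card = 4 := hG.1.card_eq_of_isMaximalClique Q.2
  have hU : ((qi : Finset V) ∪ qj).card = 6 := by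
    have := Finset.card_union_add_card_inter (qi : Finset V) qj
    rw [hcard, hcard, hcap] at this
    omega
  have h7 : 7 ≤ compCount G ((qi : Finset V) ∪ qj) := by
    have := hT.ncard_neighborSet_add_le_compCount hcard (by omega) hp hlen
    change (T.neighborSet qi).ncard = 4 at hqi
    change (T.neighborSet qj).ncard = 4 at hqj
    omega
  have hUne : ((qi : Finset V) ∪ qj).Nonempty := Finset.card_pos.1 (by omega)
  refine ⟨hU, h7, toughness_lt_one_of_card_lt_compCount hUne (by omega), fun hH => ?_⟩
  have := compCount_le_card_of_isHamiltonian hH hUne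
  omega

/-- If the clique-tree of a RAN has two degree-4 vertices joined by a neat slim path
with at least 2 internal vertices and `|Q_i ∩ Q_j| = 2`, then removing
`S = Q_i ∪ Q_j` (with `|S| = 6`) produces at least 7 components, hence `τ(G) < 1`
and `G` is non-Hamiltonian. -/
theorem ran_slimPath_case1 {V : Type*} [Fintype V] [DecidableEq V]
    (G : SimpleGraph V) (hG : IsRAN G)
    (T : SimpleGraph {Q : Finset V // IsMaximalClique G Q}) (hT : IsCliqueTree G T)
    (qi qj : {Q : Finset V // IsMaximalClique G Q})
    (hqi : deg T qi = 4) (hqj : deg T qj = 4)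
    (p : T.Walk qi qj) (hp : p.IsPath) (hlen : 3 ≤ p.length)
    (hneat : ∀ q ∈ p.support, q ≠ qi → q ≠ qj → deg T q ≤ 3)
    (hslim : ∃ q ∈ p.support, q ≠ qi ∧ q ≠ qj ∧ deg T q = 2)
    (hcap : ((qi : Finset V) ∩ (qj : Finset V)).card = 2) :
    ((qi : Finset V) ∪ (qj : Finset V)).card = 6 ∧
    7 ≤ compCount G ((qi : Finset V) ∪ (qj : Finset V)) ∧
    toughness G < 1 ∧ ¬ G.IsHamiltonian :=
  ran_slimPath_case1_general G hG T hT qi qj hqi hqj p hp hlen hcap
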